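/- Let K be a connected subset of a finite graph with uniform edge length δ. If u is infinity harmonic in K (Δ∞u = 0 on K), then u satisfies comparison with cones on K: for every x₀ ∈ ∂K, λ ≥ 0, α ∈ ℝ, if u ≤ α + λ·d_K(x₀,·) on ∂K then u ≤ α + λ·d_K(x₀,·) on K, and symmetrically for the lower cone bound. -/

import Mathlib

/-!
Comparison with cones is a maximum principle for `w = u - lam * d_K(x₀, ·)` on `K ∪ ∂K`, for
`lam > 0` and `Δ∞ u ≥ 0` on `K`: a maximum point of `w` farthest from `x₀` cannot lie in `K`, so
`w ≤ 0` follows from the boundary data. The slope `lam = 0` is the limit `lam → 0⁺`, and the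
lower bound is the upper one for `-u`, since `Δ∞ (-u) = -Δ∞ u`.
-/

open Filter Topology
open scoped Classical

noncomputable section

variable {V : Type*}

/-- A path from `x` to `y` whose interior vertices `l` all lie in `K`. -/
def pathIn (adj : V → V → Prop) (K : Set V) (x y : V) (l : List V) : Prop :=
  List.Chain adj x (l ++ [y]) ∧ ∀ z ∈ l, z ∈ K

/-- The restricted path metric `d_K` (edge length `δ`), via paths with interior in `K`. -/
def dK (adj : V → V → Prop) (K : Set V) (δ : ℝ) (x y : V) : ℝ :=
  if x = y then 0
  else sInf {r : ℝ | ∃ l : List V, pathIn adj K x y l ∧ r = δ * (l.length + 1)}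

/-- The boundary of a vertex set `K`. -/
def bdry (adj : V → V → Prop) (K : Set V) : Set V :=
  {y | y ∉ K ∧ ∃ x ∈ K, adj x y}

/-- The graph infinity Laplacian. -/
def lapInf (adj : V → V → Prop) (u : V → ℝ) (x : V) : ℝ :=
  sSup ((fun y => u y - u x) '' {y | adj x y}) +
    sInf ((fun y => u y - u x) '' {y | adj x y})

/-- The local Lipschitz constant `F(u,x)` at a vertex `x`. -/
def locLip (adj : V → V → Prop) (δ : ℝ) (u : V → ℝ) (x : V) : ℝ :=
  sSup ((fun y => |u x - u y| / δ) '' {y | adj x y})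

/-- The Lipschitz constant of `u` over the set `A`, measured in the metric `d_K`. -/
def LipOn (adj : V → V → Prop) (K A : Set V) (δ : ℝ) (u : V → ℝ) : ℝ :=
  sSup {r : ℝ | ∃ x ∈ A, ∃ y ∈ A, x ≠ y ∧ r = |u x - u y| / dK adj K δ x y}

/-- `K` is connected: any two points of `K ∪ ∂K` are joined by a path through `K`. -/
def connectedIn (adj : V → V → Prop) (K : Set V) : Prop :=
  ∀ x ∈ K ∪ bdry adj K, ∀ y ∈ K ∪ bdry adj K, x ≠ y → ∃ l, pathIn adj K x y l

section PathMetric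

variable {adj : V → V → Prop} {K : Set V} {δ : ℝ} {x y z : V} {l : List V}

lemma pathIn_append_singleton_iff :
    pathIn adj K x z (l ++ [y]) ↔ pathIn adj K x y l ∧ y ∈ K ∧ adj y z := by
  have hsplit : l ++ [y] ++ [z] = l ++ y :: [z] := by simp
  change List.IsChain adj (x :: (l ++ [y] ++ [z])) ∧ _ ↔
    (List.IsChain adj (x :: (l ++ [y])) ∧ _) ∧ _
  rw [hsplit, List.isChain_cons_split, List.isChain_pair]
  simp only [List.mem_append, List.mem_singleton, or_imp, forall_and, forall_eq]
  tauto

lemma dK_self : dK adj K δ x x = 0 := by simp [dK]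

lemma dK_of_ne (hxy : x ≠ y) :
    dK adj K δ x y = sInf {r : ℝ | ∃ l : List V, pathIn adj K x y l ∧ r = δ * (l.length + 1)} :=
  if_neg hxy

lemma dK_nonneg (hδ : 0 ≤ δ) : 0 ≤ dK adj K δ x y := by
  by_cases hxy : x = y
  · simp [hxy, dK_self]
  · rw [dK_of_ne hxy]
    exact Real.sInf_nonneg fun r ⟨l, _, hr⟩ => hr ▸ by positivity

lemma dK_le_of_pathIn (hδ : 0 ≤ δ) (hl : pathIn adj K x y l) :
    dK adj K δ x y ≤ δ * (l.length + 1) := by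
  by_cases hxy : x = y
  · subst hxy
    rw [dK_self]
    positivity
  · rw [dK_of_ne hxy]
    exact csInf_le ⟨0, fun r ⟨l, _, hr⟩ => hr ▸ by positivity⟩ ⟨l, hl, rfl⟩

lemma exists_pathIn_dK_eq (hδ : 0 ≤ δ) (hxy : x ≠ y) (h : ∃ l, pathIn adj K x y l) :
    ∃ l, pathIn adj K x y l ∧ dK adj K δ x y = δ * (l.length + 1) := by
  have hlen : ∃ n, ∃ l, pathIn adj K x y l ∧ l.length = n :=
    let ⟨l, hl⟩ := h; ⟨_, l, hl, rfl⟩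
  obtain ⟨l, hl, hn⟩ := Nat.find_spec hlen
  refine ⟨l, hl, (dK_le_of_pathIn hδ hl).antisymm ?_⟩
  rw [dK_of_ne hxy]
  refine le_csInf (let ⟨l, hl⟩ := h; ⟨_, l, hl, rfl⟩) ?_
  rintro r ⟨l', hl', rfl⟩
  have : l.length ≤ l'.length := hn ▸ Nat.find_min' hlen ⟨l', hl', rfl⟩
  gcongr

lemma dK_le_add_of_adj (hδ : 0 ≤ δ) (hxy : x ≠ y) (h : ∃ l, pathIn adj K x y l)
    (hy : y ∈ K) (hyz : adj y z) : dK adj K δ x z ≤ dK adj K δ x y + δ := by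
  obtain ⟨l, hl, hd⟩ := exists_pathIn_dK_eq hδ hxy h
  have := dK_le_of_pathIn hδ (pathIn_append_singleton_iff.2 ⟨hl, hy, hyz⟩)
  simp only [List.length_append, List.length_singleton, Nat.cast_add, Nat.cast_one] at this
  linarith

lemma exists_adj_dK_add_le (hδ : 0 ≤ δ) (hxy : x ≠ y) (h : ∃ l, pathIn adj K x y l) :
    ∃ z, adj z y ∧ (z = x ∨ z ∈ K) ∧ dK adj K δ x z + δ ≤ dK adj K δ x y := by
  obtain ⟨l, hl, hd⟩ := exists_pathIn_dK_eq hδ hxy h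
  rcases l.eq_nil_or_concat with rfl | ⟨l', z, rfl⟩
  · refine ⟨x, List.isChain_pair.1 hl.1, Or.inl rfl, ?_⟩
    simp [dK_self, hd]
  · rw [List.concat_eq_append] at hl hd
    rw [pathIn_append_singleton_iff] at hl
    refine ⟨z, hl.2.2, Or.inr hl.2.1, ?_⟩
    have := dK_le_of_pathIn hδ hl.1
    simp only [hd, List.length_append, List.length_singleton, Nat.cast_add, Nat.cast_one]
    linarith

end PathMetric

section InfinityLaplacian

variable {adj : V → V → Prop} {u : V → ℝ} {x z : V}

lemma lapInf_neg : lapInf adj (-u) x = -lapInf adj u x := by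
  have himage : (fun y => (-u) y - (-u) x) '' {y | adj x y} =
      -((fun y => u y - u x) '' {y | adj x y}) := by
    rw [← Set.image_neg_eq_neg, Set.image_image]
    exact Set.image_congr fun y _ => by simp only [Pi.neg_apply]; ring
  simp only [lapInf, himage, Real.sSup_neg, Real.sInf_neg]
  ring

lemma exists_adj_sub_le_of_lapInf_nonneg [Finite V] (hu : 0 ≤ lapInf adj u x) (hz : adj x z) :
    ∃ y, adj x y ∧ u x - u z ≤ u y - u x := by
  set S := (fun y => u y - u x) '' {y | adj x y}
  have hS : S.Finite := Set.toFinite S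
  obtain ⟨y, hy, hyS⟩ := (Set.Nonempty.image _ ⟨z, hz⟩ : S.Nonempty).csSup_mem hS
  have hinf : sInf S ≤ u z - u x := csInf_le hS.bddBelow ⟨z, hz, rfl⟩
  refine ⟨y, hy, ?_⟩
  simp only [lapInf] at hu
  simp only at hyS
  linarith

end InfinityLaplacian

section Comparison

variable [Finite V] {adj : V → V → Prop} {K : Set V} {δ lam α : ℝ} {u : V → ℝ} {x₀ x : V}

/-- Along a shortest path into `x` the cone rises by `lam * δ` in the last step, so `u` descends
by at least `lam * δ` there; `Δ∞ u ≥ 0` then forces an ascent of `lam * δ` to some neighbour `y`,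
which the cone can only absorb if `y` is one step farther from `x₀`. -/
lemma exists_isMaxOn_dK_lt_of_lapInf_nonneg (hsymm : ∀ x y, adj x y → adj y x) (hδ : 0 < δ)
    (hlam : 0 < lam) (hx₀ : x₀ ∈ bdry adj K) (hx : x ∈ K) (hreach : ∃ l, pathIn adj K x₀ x l)
    (hu : 0 ≤ lapInf adj u x)
    (hmax : IsMaxOn (fun v => u v - lam * dK adj K δ x₀ v) (K ∪ bdry adj K) x) :
    ∃ y, IsMaxOn (fun v => u v - lam * dK adj K δ x₀ v) (K ∪ bdry adj K) y ∧
      y ∈ K ∪ bdry adj K ∧ dK adj K δ x₀ x < dK adj K δ x₀ y := by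
  have hx₀x : x₀ ≠ x := fun h => hx₀.1 (h ▸ hx)
  obtain ⟨z, hzx, hz, hdz⟩ := exists_adj_dK_add_le hδ.le hx₀x hreach
  have hzT : z ∈ K ∪ bdry adj K := hz.elim (fun h => Or.inr (h ▸ hx₀)) Or.inl
  have hwz := isMaxOn_iff.1 hmax z hzT
  obtain ⟨y, hxy, hy⟩ := exists_adj_sub_le_of_lapInf_nonneg hu (hsymm z x hzx)
  have hyT : y ∈ K ∪ bdry adj K := by
    by_cases hyK : y ∈ K
    · exact Or.inl hyK
    · exact Or.inr ⟨hyK, x, hx, hxy⟩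
  have hwy := isMaxOn_iff.1 hmax y hyT
  have hdy := dK_le_add_of_adj hδ.le hx₀x hreach hx hxy
  have hascent : lam * δ ≤ u y - u x := by nlinarith
  refine ⟨y, isMaxOn_iff.2 fun v hv => (isMaxOn_iff.1 hmax v hv).trans ?_, hyT, ?_⟩
  · nlinarith
  · by_contra! hle
    nlinarith

lemma le_add_mul_dK_of_lapInf_nonneg_of_pos (hsymm : ∀ x y, adj x y → adj y x) (hδ : 0 < δ)
    (hlam : 0 < lam) (hx₀ : x₀ ∈ bdry adj K) (hreach : ∀ x ∈ K, ∃ l, pathIn adj K x₀ x l)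
    (hu : ∀ x ∈ K, 0 ≤ lapInf adj u x)
    (hb : ∀ y ∈ bdry adj K, u y ≤ α + lam * dK adj K δ x₀ y) :
    ∀ x ∈ K, u x ≤ α + lam * dK adj K δ x₀ x := by
  set T := K ∪ bdry adj K
  set w := fun v => u v - lam * dK adj K δ x₀ v
  obtain ⟨x₁, hx₁T, hx₁⟩ := T.exists_max_image w T.toFinite ⟨x₀, Or.inr hx₀⟩
  set M := {v ∈ T | IsMaxOn w T v}
  obtain ⟨xs, ⟨hxsT, hxs⟩, hfar⟩ :=
    M.exists_max_image (dK adj K δ x₀) M.toFinite ⟨x₁, hx₁T, isMaxOn_iff.2 hx₁⟩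
  have hxsb : xs ∈ bdry adj K := by
    refine hxsT.resolve_left fun hxsK => ?_
    obtain ⟨y, hy, hyT, hlt⟩ := exists_isMaxOn_dK_lt_of_lapInf_nonneg hsymm hδ hlam hx₀ hxsK
      (hreach xs hxsK) (hu xs hxsK) hxs
    exact (hfar y ⟨hyT, hy⟩).not_gt hlt
  intro x hx
  have hwx := isMaxOn_iff.1 hxs x (Or.inl hx)
  have hbxs := hb xs hxsb
  simp only [w] at hwx
  linarith

lemma le_add_mul_dK_of_lapInf_nonneg (hsymm : ∀ x y, adj x y → adj y x) (hδ : 0 < δ)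
    (hlam : 0 ≤ lam) (hx₀ : x₀ ∈ bdry adj K) (hreach : ∀ x ∈ K, ∃ l, pathIn adj K x₀ x l)
    (hu : ∀ x ∈ K, 0 ≤ lapInf adj u x)
    (hb : ∀ y ∈ bdry adj K, u y ≤ α + lam * dK adj K δ x₀ y) :
    ∀ x ∈ K, u x ≤ α + lam * dK adj K δ x₀ x := by
  rcases hlam.eq_or_lt with rfl | hlam
  · intro x hx
    have hcont : Continuous fun ε : ℝ => α + ε * dK adj K δ x₀ x := by fun_prop
    have hlim := (hcont.tendsto 0).mono_left (nhdsWithin_le_nhds (s := Set.Ioi 0))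
    refine ge_of_tendsto hlim (eventually_nhdsWithin_of_forall fun ε hε => ?_)
    refine le_add_mul_dK_of_lapInf_nonneg_of_pos hsymm hδ hε hx₀ hreach hu (fun y hy => ?_) x hx
    have := dK_nonneg hδ.le (adj := adj) (K := K) (x := x₀) (y := y)
    nlinarith [hb y hy, Set.mem_Ioi.1 hε]
  · exact le_add_mul_dK_of_lapInf_nonneg_of_pos hsymm hδ hlam hx₀ hreach hu hb

lemma sub_mul_dK_le_of_lapInf_nonpos (hsymm : ∀ x y, adj x y → adj y x) (hδ : 0 < δ)
    (hlam : 0 ≤ lam) (hx₀ : x₀ ∈ bdry adj K) (hreach : ∀ x ∈ K, ∃ l, pathIn adj K x₀ x l)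
    (hu : ∀ x ∈ K, lapInf adj u x ≤ 0)
    (hb : ∀ y ∈ bdry adj K, α - lam * dK adj K δ x₀ y ≤ u y) :
    ∀ x ∈ K, α - lam * dK adj K δ x₀ x ≤ u x := by
  intro x hx
  have := le_add_mul_dK_of_lapInf_nonneg (u := -u) (α := -α) hsymm hδ hlam hx₀ hreach
    (fun x hx => by rw [lapInf_neg]; linarith [hu x hx])
    (fun y hy => by linarith [Pi.neg_apply u y, hb y hy]) x hx
  linarith [Pi.neg_apply u x]

end Comparison

/-- Infinity harmonic functions satisfy comparison with cones. -/
theorem stmt9 [Fintype V] (adj : V → V → Prop) (hsymm : ∀ x y, adj x y → adj y x)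
    (δ : ℝ) (hδ : 0 < δ) (K : Set V) (hconn : connectedIn adj K)
    (u : V → ℝ) (hu : ∀ x ∈ K, lapInf adj u x = 0) :
    ∀ x₀ ∈ bdry adj K, ∀ lam : ℝ, 0 ≤ lam → ∀ α : ℝ,
      ((∀ y ∈ bdry adj K, u y ≤ α + lam * dK adj K δ x₀ y) →
        ∀ x ∈ K, u x ≤ α + lam * dK adj K δ x₀ x) ∧
      ((∀ y ∈ bdry adj K, α - lam * dK adj K δ x₀ y ≤ u y) →
        ∀ x ∈ K, α - lam * dK adj K δ x₀ x ≤ u x) := by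
  intro x₀ hx₀ lam hlam α
  have hreach : ∀ x ∈ K, ∃ l, pathIn adj K x₀ x l := fun x hx =>
    hconn x₀ (Or.inr hx₀) x (Or.inl hx) fun h => hx₀.1 (h ▸ hx)
  exact ⟨le_add_mul_dK_of_lapInf_nonneg hsymm hδ hlam hx₀ hreach fun x hx => (hu x hx).ge,
    sub_mul_dK_le_of_lapInf_nonpos hsymm hδ hlam hx₀ hreach fun x hx => (hu x hx).le⟩
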